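/- For every commutative ring A, every family of weights R : ℤ → A, every m ≥ 1, all g_1, …, g_m ∈ A, every integer n ≥ 0 and every natural number j ≥ 1, the following unconditional difference identity holds: Γ_{2j}(n+1) − Γ_{2j}(n) = Σ_{i=1}^{j} (−1)^{i−1} · Π_{n,n+2j−2}(i) · (Γ_{2j−2i}(n+1) − Γ_{2j−2i}(n)) − Σ_{i=1}^{j} (−1)^{i} · R_n · Π_{n+1,n+2j−2}(i−1) · (Γ_{2j−2i}(n+2) − Γ_{2j−2i}(n)). -/

import Mathlib

open Finset

variable {A : Type*} [CommRing A]

/-- End height of a walk starting at a given height, with steps given by a list of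
Booleans (`true` = ascending step `+1`, `false` = descending step `-1`). -/
def walkEnd : ℤ → List Bool → ℤ
  | a, [] => a
  | a, true :: s => walkEnd (a + 1) s
  | a, false :: s => walkEnd (a - 1) s

/-- Weight of a walk: the product of `R h` over all descending steps `h → h - 1`. -/
def walkWeight (R : ℤ → A) : ℤ → List Bool → A
  | _, [] => 1
  | a, true :: s => walkWeight R (a + 1) s
  | a, false :: s => R a * walkWeight R (a - 1) s

/-- Whether every height visited by the walk (including the first and last) is `≥ c`. -/
def walkAbove (c : ℤ) : ℤ → List Bool → Bool
  | a, [] => decide (c ≤ a)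
  | a, true :: s => decide (c ≤ a) && walkAbove c (a + 1) s
  | a, false :: s => decide (c ≤ a) && walkAbove c (a - 1) s

/-- `Zw R a b k`: the generating function of walks of length `k` from height `a` to
height `b`, each walk weighted by `R h` per descending step from height `h`. -/
def Zw (R : ℤ → A) (a b : ℤ) (k : ℕ) : A :=
  ∑ s : Fin k → Bool,
    if walkEnd a (List.ofFn s) = b then walkWeight R a (List.ofFn s) else 0

/-- `Zwp R a b k`: the same generating function, restricted to walks staying at
heights `≥ a` ("positive walks"). -/
def Zwp (R : ℤ → A) (a b : ℤ) (k : ℕ) : A :=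
  ∑ s : Fin k → Bool,
    if walkEnd a (List.ofFn s) = b ∧ walkAbove a a (List.ofFn s) = true then
      walkWeight R a (List.ofFn s)
    else 0

/-- `Pdim R a b k`: hard-dimer partition function on the segment `[a,b]`: the sum over
`k`-element subsets `S` of `{a+1, …, b}` with no two consecutive elements of
`∏ i in S, R i` (a dimer on `[i-1,i]` carries weight `R i`). -/
noncomputable def Pdim (R : ℤ → A) (a b : ℤ) (k : ℕ) : A :=
  ∑ S ∈ Finset.powersetCard k (Finset.Icc (a + 1) b),
    if ∀ i ∈ S, i + 1 ∉ S then ∏ i ∈ S, R i else 0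

/-- `Vp R g m a b = Σ_{k=1}^{m} g_k • Zw R a b (2k-1)`: grand-canonical generating
function for walks of odd length from `a` to `b`. -/
def Vp (R : ℤ → A) (g : ℕ → A) (m : ℕ) (a b : ℤ) : A :=
  ∑ k ∈ Finset.Icc 1 m, g k * Zw R a b (2 * k - 1)

/-- The conserved quantities `Γ_{2i}(n)`; `Gam R g m i n` stands for `Γ_{2i}(n)`. -/
def Gam (R : ℤ → A) (g : ℕ → A) (m : ℕ) (i : ℕ) (n : ℤ) : A :=
  if i = 0 then R (n - 1) - Vp R g m (n - 1) (n - 2) + (if n = 0 then 1 else 0)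
  else
    Zwp R (n - 1) (n - 1) (2 * i) *
        (R (n - 1) - Vp R g m (n - 1) (n - 2) + (if n = 0 then 1 else 0)) -
      ∑ j ∈ Finset.Icc 1 i,
        Zwp R (n - 1) (n - 1 + 2 * (j : ℤ)) (2 * i) * Vp R g m (n + 2 * (j : ℤ) - 1) (n - 2)

/-- The symmetric conserved quantities `Γ̃_{2i}(n)`; `Gamt R g m i n` stands
for `Γ̃_{2i}(n)`. -/
def Gamt (R : ℤ → A) (g : ℕ → A) (m : ℕ) (i : ℕ) (n : ℤ) : A :=
  if i = 0 then R n - Vp R g m n (n - 1)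
  else
    (Zw R n (n - 1) (2 * i - 1) - R (n - 1) * R (n + 1) * Zw R (n - 2) (n + 1) (2 * i - 1)) *
        (R n - Vp R g m n (n - 1)) -
      ∑ j ∈ Finset.Icc 1 i,
        (Zw R (n - (j : ℤ)) (n + (j : ℤ) - 1) (2 * i - 1) -
            R (n - (j : ℤ) - 1) * R (n + (j : ℤ) + 1) *
              Zw R (n - (j : ℤ) - 2) (n + (j : ℤ) + 1) (2 * i - 1)) *
          Vp R g m (n + (j : ℤ)) (n - (j : ℤ) - 1)

/-- The master equation: `R i = 0` for `i < 0` and `R n = 1 + V'_{n,n-1}` for `n ≥ 0`. -/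
def MasterEq (R : ℤ → A) (g : ℕ → A) (m : ℕ) : Prop :=
  (∀ i : ℤ, i < 0 → R i = 0) ∧ ∀ n : ℤ, 0 ≤ n → R n = 1 + Vp R g m n (n - 1)

/-- `Zodd R a b i = Zw R a b (2i-1)`, with the convention that for `i = 0`
(walks of length `-1`) it equals `1` if `b = a - 1` and `0` otherwise. -/
def Zodd (R : ℤ → A) (a b : ℤ) (i : ℕ) : A :=
  if i = 0 then (if b = a - 1 then 1 else 0) else Zw R a b (2 * i - 1)

/-- Binomial coefficient with an integer lower index, with the convention that it
vanishes for negative lower index. -/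
def Cz (n : ℕ) (p : ℤ) : ℤ := if 0 ≤ p then n.choose p.toNat else 0

/-!
Write `Γ_{2k}(ν) = Σ_s Z⁺_{ν-1,ν-1+2s}(2k) · w_s(ν)` with `w_0 = Γ_0` and
`w_s(ν) = -V'_{ν+2s-1,ν-2}`. Alternating sums over hard dimers invert the positive walks: for
`b ∈ {c+2k-2, c+2k-1}`, `Σ_i (-1)^i Π_{c,b}(i) Z⁺_{c,c+2s}(2k-2i) = δ_{s,k}`, plus `R_{b+1}` when
`s = k-1` and `b = c+2k-2` (proved for all lengths and endpoints by induction on the length,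
removing the last step of the walks). Hence `Σ_i (-1)^i Π_{ν-1,b}(i) Γ_{2k-2i}(ν)` collapses to
`w_k(ν)`, plus `R_{b+1} w_{k-1}(ν)` in the boundary case. Splitting `Π_{n-1,b}` at its first site
turns the claim into `w_j(n+1) + R_{n+2j-1} w_{j-1}(n+1) = w_j(n) + R_n w_{j-1}(n+2)`, which says
that the odd walks in `V'` may be extended by one step at either end.
-/

theorem walkEnd_append (a : ℤ) (l₁ l₂ : List Bool) :
    walkEnd a (l₁ ++ l₂) = walkEnd (walkEnd a l₁) l₂ := by
  induction l₁ generalizing a with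
  | nil => rfl
  | cons x l ih => cases x <;> simp [walkEnd, ih]

theorem walkWeight_append (R : ℤ → A) (a : ℤ) (l₁ l₂ : List Bool) :
    walkWeight R a (l₁ ++ l₂) = walkWeight R a l₁ * walkWeight R (walkEnd a l₁) l₂ := by
  induction l₁ generalizing a with
  | nil => simp [walkWeight, walkEnd]
  | cons x l ih => cases x <;> simp [walkWeight, walkEnd, ih, mul_assoc]

theorem walkAbove_eq_and (c a : ℤ) (l : List Bool) :
    walkAbove c a l = (decide (c ≤ a) && walkAbove c a l) := by
  cases l with
  | nil => simp [walkAbove]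
  | cons x l => cases x <;> simp [walkAbove]

theorem walkAbove_append (c a : ℤ) (l₁ l₂ : List Bool) :
    walkAbove c a (l₁ ++ l₂) = (walkAbove c a l₁ && walkAbove c (walkEnd a l₁) l₂) := by
  induction l₁ generalizing a with
  | nil => exact walkAbove_eq_and c a l₂
  | cons x l ih => cases x <;> simp [walkAbove, walkEnd, ih, Bool.and_assoc]

theorem le_walkEnd_of_walkAbove {c a : ℤ} {l : List Bool} (h : walkAbove c a l = true) :
    c ≤ walkEnd a l := by
  induction l generalizing a with
  | nil => simpa [walkAbove, walkEnd] using h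
  | cons x l ih => cases x <;> simp only [walkAbove, Bool.and_eq_true] at h <;> exact ih h.2

theorem walkEnd_le_add_length (a : ℤ) (l : List Bool) : walkEnd a l ≤ a + l.length := by
  induction l generalizing a with
  | nil => simp [walkEnd]
  | cons x l ih => cases x <;> simp only [walkEnd, List.length_cons] <;> grind

theorem sum_ofFn_succ_eq_sum_append {M : Type*} [AddCommMonoid M] (k : ℕ)
    (F : List Bool → M) :
    ∑ s : Fin (k + 1) → Bool, F (List.ofFn s) =
      ∑ s : Fin k → Bool, (F (List.ofFn s ++ [true]) + F (List.ofFn s ++ [false])) := by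
  rw [← (Fin.snocEquiv fun _ => Bool).sum_comp, Fintype.sum_prod_type_right]
  refine sum_congr rfl fun s _ => ?_
  simp only [Fin.snocEquiv, Equiv.coe_fn_mk, Fintype.sum_bool, List.ofFn_succ',
    Fin.snoc_castSucc, Fin.snoc_last, List.concat_eq_append]

theorem sum_ofFn_succ_eq_sum_cons {M : Type*} [AddCommMonoid M] (k : ℕ)
    (F : List Bool → M) :
    ∑ s : Fin (k + 1) → Bool, F (List.ofFn s) =
      ∑ s : Fin k → Bool, (F (true :: List.ofFn s) + F (false :: List.ofFn s)) := by
  rw [← (Fin.consEquiv fun _ => Bool).sum_comp, Fintype.sum_prod_type_right]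
  refine sum_congr rfl fun s _ => ?_
  simp [Fin.consEquiv, List.ofFn_succ]

theorem Zw_succ (R : ℤ → A) (a b : ℤ) (k : ℕ) :
    Zw R a b (k + 1) = Zw R a (b - 1) k + R (b + 1) * Zw R a (b + 1) k := by
  rw [Zw, sum_ofFn_succ_eq_sum_append k
    fun l => if walkEnd a l = b then walkWeight R a l else 0, Zw, Zw, mul_sum, ← sum_add_distrib]
  refine sum_congr rfl fun s _ => ?_
  simp only [walkEnd_append, walkWeight_append, walkEnd, walkWeight, mul_one]
  generalize walkEnd a (List.ofFn s) = e
  split_ifs <;> grind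

theorem Zw_succ' (R : ℤ → A) (a b : ℤ) (k : ℕ) :
    Zw R a b (k + 1) = Zw R (a + 1) b k + R a * Zw R (a - 1) b k := by
  rw [Zw, sum_ofFn_succ_eq_sum_cons k
    fun l => if walkEnd a l = b then walkWeight R a l else 0, Zw, Zw, mul_sum, ← sum_add_distrib]
  refine sum_congr rfl fun s _ => ?_
  simp only [walkEnd, walkWeight, mul_ite, mul_zero]
  rfl

theorem Zwp_zero (R : ℤ → A) (a b : ℤ) : Zwp R a b 0 = if a = b then 1 else 0 := by
  simp [Zwp, walkEnd, walkAbove, walkWeight]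

theorem Zwp_of_lt (R : ℤ → A) {a b : ℤ} (k : ℕ) (h : b < a) : Zwp R a b k = 0 :=
  sum_eq_zero fun _ _ => if_neg fun ⟨hb, ha⟩ => (hb ▸ le_walkEnd_of_walkAbove ha).not_gt h

theorem Zwp_of_add_lt (R : ℤ → A) {a b : ℤ} {k : ℕ} (h : a + k < b) : Zwp R a b k = 0 :=
  sum_eq_zero fun _ _ => if_neg fun ⟨hb, _⟩ => by
    have := hb ▸ walkEnd_le_add_length a (List.ofFn _)
    rw [List.length_ofFn] at this
    omega

theorem Zwp_succ (R : ℤ → A) {a b : ℤ} (k : ℕ) (h : a ≤ b) :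
    Zwp R a b (k + 1) = Zwp R a (b - 1) k + R (b + 1) * Zwp R a (b + 1) k := by
  rw [Zwp, sum_ofFn_succ_eq_sum_append k
    fun l => if walkEnd a l = b ∧ walkAbove a a l then walkWeight R a l else 0, Zwp, Zwp,
    mul_sum, ← sum_add_distrib]
  refine sum_congr rfl fun s _ => ?_
  simp only [walkEnd_append, walkWeight_append, walkAbove_append, walkEnd, walkWeight,
    walkAbove, mul_one, Bool.and_eq_true, decide_eq_true_eq]
  have hfloor := @le_walkEnd_of_walkAbove a a (List.ofFn s)
  generalize walkEnd a (List.ofFn s) = e at hfloor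
  split_ifs <;> grind

theorem Pdim_zero (R : ℤ → A) (a b : ℤ) : Pdim R a b 0 = 1 := by
  simp [Pdim]

theorem Pdim_eq_zero (R : ℤ → A) {a b : ℤ} {i : ℕ} (hi : 1 ≤ i) (h : b + 1 < a + 2 * i) :
    Pdim R a b i = 0 := by
  refine sum_eq_zero fun S hS => if_neg fun hS' => ?_
  rw [mem_powersetCard] at hS
  have hdisj : Disjoint S (S.image (· + 1)) := by
    rw [disjoint_left]
    intro x hx hx'
    obtain ⟨y, hy, rfl⟩ := mem_image.1 hx'
    exact hS' y hy hx
  have hsub : S ∪ S.image (· + 1) ⊆ Icc (a + 1) (b + 1) := by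
    intro x hx
    rcases mem_union.1 hx with hx | hx
    · have := hS.1 hx; rw [mem_Icc] at this ⊢; omega
    · obtain ⟨y, hy, rfl⟩ := mem_image.1 hx
      have := hS.1 hy; rw [mem_Icc] at this ⊢; omega
  have hcard := card_le_card hsub
  rw [card_union_of_disjoint hdisj, card_image_of_injective _ (add_left_injective 1), hS.2,
    Int.card_Icc] at hcard
  omega

theorem noConsecutive_insert_iff {a : ℤ} {T : Finset ℤ} (hT : ∀ i ∈ T, a + 2 ≤ i) :
    (∀ i ∈ insert (a + 1) T, i + 1 ∉ insert (a + 1) T) ↔ a + 2 ∉ T ∧ ∀ i ∈ T, i + 1 ∉ T := by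
  have hT' : ∀ i ∈ T, i + 1 ≠ a + 1 := fun i hi => by have := hT i hi; omega
  simp only [mem_insert, forall_eq_or_imp, not_or, add_assoc, one_add_one_eq_two]
  constructor
  · rintro ⟨⟨-, h⟩, hcons⟩
    exact ⟨h, fun i hi => (hcons i hi).2⟩
  · rintro ⟨h, hcons⟩
    exact ⟨⟨by omega, h⟩, fun i hi => ⟨hT' i hi, hcons i hi⟩⟩

theorem sum_powersetCard_insert_eq_mul_Pdim (R : ℤ → A) (a b : ℤ) (e : ℕ) :
    ∑ T ∈ powersetCard e (Icc (a + 2) b),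
        (if ∀ i ∈ insert (a + 1) T, i + 1 ∉ insert (a + 1) T then ∏ i ∈ insert (a + 1) T, R i
        else 0) =
      R (a + 1) * Pdim R (a + 2) b e := by
  have hge {T : Finset ℤ} {c : ℤ} (hT : T ∈ powersetCard e (Icc c b)) : ∀ i ∈ T, c ≤ i :=
    fun i hi => (mem_Icc.1 ((mem_powersetCard.1 hT).1 hi)).1
  have hsub : powersetCard e (Icc (a + 2 + 1) b) ⊆ powersetCard e (Icc (a + 2) b) :=
    powersetCard_mono (Icc_subset_Icc_left (by omega))
  rw [Pdim, mul_sum, ← sum_subset hsub]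
  · refine sum_congr rfl fun T hT => ?_
    have hT := hge hT
    have h1 : a + 1 ∉ T := fun h => by linarith [hT _ h]
    have h2 : a + 2 ∉ T := fun h => by linarith [hT _ h]
    simp only [noConsecutive_insert_iff (a := a) fun i hi => by linarith [hT i hi], prod_insert h1,
      h2, not_false_eq_true, true_and, mul_ite, mul_zero]
  · intro T hT hT'
    have ha : a + 2 ∈ T := by
      by_contra ha
      refine hT' (mem_powersetCard.2 ⟨fun i hi => ?_, (mem_powersetCard.1 hT).2⟩)
      have := mem_Icc.1 ((mem_powersetCard.1 hT).1 hi)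
      have : i ≠ a + 2 := fun h => ha (h ▸ hi)
      exact mem_Icc.2 ⟨by omega, by omega⟩
    simp only [noConsecutive_insert_iff (hge hT), ha, not_true_eq_false, false_and, if_false]

theorem Pdim_succ (R : ℤ → A) {a b : ℤ} (e : ℕ) (h : a < b) :
    Pdim R a b (e + 1) = Pdim R (a + 1) b (e + 1) + R (a + 1) * Pdim R (a + 2) b e := by
  have hnot : a + 1 ∉ Icc (a + 2) b := by simp
  have hIcc : Icc (a + 1) b = insert (a + 1) (Icc (a + 2) b) := by
    ext; simp only [mem_Icc, mem_insert]; omega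
  have hdisj : Disjoint (powersetCard (e + 1) (Icc (a + 2) b))
      ((powersetCard e (Icc (a + 2) b)).image (insert (a + 1))) := by
    refine disjoint_left.2 fun S hS hS' => ?_
    obtain ⟨T, -, rfl⟩ := mem_image.1 hS'
    exact hnot ((mem_powersetCard.1 hS).1 (mem_insert_self _ _))
  have hinj : Set.InjOn (insert (a + 1)) (powersetCard e (Icc (a + 2) b) : Set (Finset ℤ)) := by
    intro S hS T hT hST
    rw [mem_coe, mem_powersetCard] at hS hT
    rw [← erase_insert fun h => hnot (hS.1 h), hST, erase_insert fun h => hnot (hT.1 h)]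
  rw [Pdim, hIcc, powersetCard_succ_insert hnot, sum_union hdisj, sum_image hinj,
    sum_powersetCard_insert_eq_mul_Pdim, Pdim.eq_1 R (a + 1), add_assoc a 1 1, one_add_one_eq_two]

theorem Vp_sub_one_add_mul (R : ℤ → A) (g : ℕ → A) (m : ℕ) (a b : ℤ) :
    Vp R g m a (b - 1) + R (b + 1) * Vp R g m a (b + 1) =
      Vp R g m (a + 1) b + R a * Vp R g m (a - 1) b := by
  simp only [Vp, mul_sum, ← sum_add_distrib]
  refine sum_congr rfl fun k hk => ?_
  obtain ⟨k, rfl⟩ : ∃ k', k = k' + 1 := ⟨k - 1, by have := (mem_Icc.1 hk).1; omega⟩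
  have hlast := Zw_succ R a b (2 * k + 1)
  have hfirst := Zw_succ' R a b (2 * k + 1)
  rw [show 2 * (k + 1) - 1 = 2 * k + 1 by omega]
  linear_combination g (k + 1) * (hfirst - hlast)

noncomputable def dimerWalkSum (R : ℤ → A) (c b x : ℤ) (k : ℕ) : A :=
  ∑ i ∈ range (k + 1), if 2 * i ≤ k then (-1) ^ i * Pdim R c b i * Zwp R c x (k - 2 * i) else 0

/-- The closed form of `dimerWalkSum R c b (c + t - 1) k` (see `dimerWalkSum_eq`); the shift by
one lets `t = 0` encode the boundary term of `dimerWalkSum_succ`. -/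
noncomputable def dimerWalkValue (R : ℤ → A) (c b : ℤ) (t k : ℕ) : A :=
  if t ≤ k + 1 ∧ (k + 1 - t) % 2 = 0 then
    (-1) ^ ((k + 1 - t) / 2) * Pdim R (c + t) b ((k + 1 - t) / 2)
  else 0

theorem dimerWalkValue_of_eq (R : ℤ → A) (c b : ℤ) {t k e : ℕ} (h : k + 1 = t + 2 * e) :
    dimerWalkValue R c b t k = (-1) ^ e * Pdim R (c + t) b e := by
  rw [dimerWalkValue, if_pos (by omega), show (k + 1 - t) / 2 = e by omega]

theorem dimerWalkValue_of_ne (R : ℤ → A) (c b : ℤ) {t k : ℕ} (h : ∀ e, k + 1 ≠ t + 2 * e) :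
    dimerWalkValue R c b t k = 0 :=
  if_neg fun ⟨h₁, h₂⟩ => h ((k + 1 - t) / 2) (by omega)

theorem dimerWalkSum_of_lt (R : ℤ → A) {c x : ℤ} (b : ℤ) (k : ℕ) (h : x < c) :
    dimerWalkSum R c b x k = 0 :=
  sum_eq_zero fun i _ => by simp [Zwp_of_lt R _ h]

theorem dimerWalkSum_succ (R : ℤ → A) {c x : ℤ} (b : ℤ) (k : ℕ) (hx : c ≤ x) :
    dimerWalkSum R c b x (k + 1) =
      dimerWalkSum R c b (x - 1) k + R (x + 1) * dimerWalkSum R c b (x + 1) k +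
        if x = c then dimerWalkValue R c b 0 k else 0 := by
  have hterm : ∀ i ∈ range (k + 1),
      (if 2 * i ≤ k + 1 then (-1) ^ i * Pdim R c b i * Zwp R c x (k + 1 - 2 * i) else 0) =
        (if 2 * i ≤ k then (-1) ^ i * Pdim R c b i * Zwp R c (x - 1) (k - 2 * i) else 0) +
          R (x + 1) * (if 2 * i ≤ k then (-1) ^ i * Pdim R c b i * Zwp R c (x + 1) (k - 2 * i)
            else 0) +
          if x = c ∧ k + 1 = 2 * i then (-1) ^ i * Pdim R c b i else 0 := by
    intro i _
    by_cases hi : 2 * i ≤ k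
    · rw [if_pos (by omega), if_pos hi, if_pos hi, if_neg (by omega),
        show k + 1 - 2 * i = k - 2 * i + 1 by omega, Zwp_succ R _ hx]
      ring
    · by_cases hk : k + 1 = 2 * i
      · by_cases hxc : x = c <;> simp [hi, hk, hxc, eq_comm (a := c), Zwp_zero]
      · simp [hi, hk, show ¬ 2 * i ≤ k + 1 by omega]
  have hvalue : ∑ i ∈ range (k + 1), (if x = c ∧ k + 1 = 2 * i then (-1) ^ i * Pdim R c b i
      else 0) = if x = c then dimerWalkValue R c b 0 k else 0 := by
    split_ifs with hxc
    · simp only [hxc, true_and]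
      by_cases hk : ∃ e, k + 1 = 2 * e
      · obtain ⟨e, he⟩ := hk
        rw [sum_eq_single_of_mem e (mem_range.2 (by omega)) fun i _ hi => if_neg (by omega),
          if_pos he, dimerWalkValue_of_eq R c b (e := e) (by omega), Nat.cast_zero, add_zero]
      · rw [sum_eq_zero fun i _ => if_neg fun h => hk ⟨i, h⟩, dimerWalkValue_of_ne R c b
          fun e h => hk ⟨e, by simpa using h⟩]
    · simp [hxc]
  rw [dimerWalkSum, sum_range_succ, if_neg (by omega), add_zero, sum_congr rfl hterm,
    sum_add_distrib, sum_add_distrib, ← mul_sum, hvalue]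
  rfl

theorem dimerWalkValue_succ (R : ℤ → A) {c b : ℤ} {t k : ℕ} (h : c + k + 1 ≤ b + 2) :
    dimerWalkValue R c b (t + 1) (k + 1) +
        (if t + 2 = k + 1 ∧ b + 2 = c + (k + 1 : ℕ) then R (b + 1) else 0) =
      dimerWalkValue R c b t k + R (c + t + 1) * dimerWalkValue R c b (t + 2) k := by
  by_cases hpar : ∃ e, k + 1 = t + 2 * e
  · obtain ⟨e, he⟩ := hpar
    rw [dimerWalkValue_of_eq R c b (e := e) (by omega), dimerWalkValue_of_eq R c b he]
    rcases e with _ | e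
    · rw [dimerWalkValue_of_ne R c b fun _ _ => by omega, if_neg (by omega)]
      simp [Pdim_zero]
    rw [dimerWalkValue_of_eq R c b (e := e) (by omega)]
    push_cast
    rcases lt_or_ge (c + t) b with hlt | hge
    · rw [if_neg (by omega), Pdim_succ R e hlt]
      ring_nf
    · -- at `c + t = b` the first-site recursion of `Pdim` is off by exactly `R (b + 1)`
      obtain rfl : e = 0 := by omega
      obtain rfl : b = c + t := by omega
      rw [if_pos (by omega), Pdim_eq_zero R le_rfl (by omega), Pdim_eq_zero R le_rfl (by omega),
        Pdim_zero]
      ring_nf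
  · rw [dimerWalkValue_of_ne R c b fun e _ => hpar ⟨e, by omega⟩,
      dimerWalkValue_of_ne R c b fun e h => hpar ⟨e, h⟩,
      dimerWalkValue_of_ne R c b fun e _ => hpar ⟨e + 1, by omega⟩,
      if_neg fun h => hpar ⟨1, by omega⟩]
    ring

theorem dimerWalkSum_eq (R : ℤ → A) {c b : ℤ} {k : ℕ} (hk : c + k ≤ b + 2) (d : ℕ) :
    dimerWalkSum R c b (c + d) k =
      dimerWalkValue R c b (d + 1) k + if d + 2 = k ∧ b + 2 = c + k then R (b + 1) else 0 := by
  induction k generalizing d with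
  | zero =>
    rw [dimerWalkSum, sum_range_one, if_pos le_rfl, Zwp_zero,
      if_neg (c := d + 2 = 0 ∧ _) (by omega), add_zero]
    rcases d with _ | d
    · simp [dimerWalkValue_of_eq R c b (t := 1) (k := 0) (e := 0) rfl, Pdim_zero]
    · rw [if_neg (by omega), dimerWalkValue_of_ne R c b fun _ _ => by omega, mul_zero]
  | succ k ih =>
    have ih' (d : ℕ) : dimerWalkSum R c b (c + d) k = dimerWalkValue R c b (d + 1) k := by
      rw [ih (by omega) d, if_neg (by omega), add_zero]
    have hstep : dimerWalkSum R c b (c + d - 1) k +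
        (if c + d = c then dimerWalkValue R c b 0 k else 0) = dimerWalkValue R c b d k := by
      rcases d with _ | d
      · simp [dimerWalkSum_of_lt]
      · rw [if_neg (by omega), add_zero, show c + ((d + 1 : ℕ) : ℤ) - 1 = c + d by push_cast; ring,
          ih']
    rw [dimerWalkSum_succ R b k (by omega), add_right_comm, hstep,
      show c + (d : ℤ) + 1 = c + ((d + 1 : ℕ) : ℤ) by push_cast; ring, ih',
      dimerWalkValue_succ R (by omega)]
    push_cast
    ring_nf

theorem sum_range_alternating_Pdim_mul_Zwp (R : ℤ → A) {c b : ℤ} {k s : ℕ} (hs : s ≤ k)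
    (h₁ : c + 2 * k ≤ b + 2) (h₂ : b < c + 2 * k) :
    ∑ i ∈ range (k + 1), (-1) ^ i * Pdim R c b i * Zwp R c (c + 2 * s) (2 * (k - i)) =
      (if s = k then 1 else 0) + if s + 1 = k ∧ b + 2 = c + 2 * k then R (b + 1) else 0 := by
  have h := dimerWalkSum_eq R (k := 2 * k) (by push_cast; omega) (2 * s)
  rw [dimerWalkSum, ← sum_subset (range_subset_range.2 (by omega : k + 1 ≤ 2 * k + 1))
    fun i _ hi => if_neg (by rw [mem_range] at hi; omega)] at h
  rw [sum_congr rfl fun i hi => by rw [if_pos (by rw [mem_range] at hi; omega)]] at h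
  simp only [Nat.cast_mul, Nat.cast_ofNat, ← Nat.mul_sub] at h
  rw [h, dimerWalkValue_of_eq R c b (e := k - s) (by omega)]
  congr 1
  · by_cases hsk : s = k
    · simp [hsk, Pdim_zero]
    · rw [if_neg hsk, Pdim_eq_zero R (by omega) (by push_cast; omega), mul_zero]
  · exact if_congr (by omega) rfl rfl

def gamWeight (R : ℤ → A) (g : ℕ → A) (m : ℕ) (s : ℕ) (n : ℤ) : A :=
  if s = 0 then Gam R g m 0 n else -Vp R g m (n + 2 * (s : ℤ) - 1) (n - 2)

theorem Gam_eq_sum_range (R : ℤ → A) (g : ℕ → A) (m : ℕ) {k J : ℕ} (hkJ : k ≤ J) (n : ℤ) :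
    Gam R g m k n =
      ∑ s ∈ range (J + 1), Zwp R (n - 1) (n - 1 + 2 * s) (2 * k) * gamWeight R g m s n := by
  have hGam : Gam R g m k n = Zwp R (n - 1) (n - 1) (2 * k) * Gam R g m 0 n +
      ∑ s ∈ Icc 1 k, Zwp R (n - 1) (n - 1 + 2 * s) (2 * k) * gamWeight R g m s n := by
    rcases k with _ | k
    · simp [Zwp_zero]
    · rw [Gam, if_neg k.succ_ne_zero, sub_eq_add_neg, ← sum_neg_distrib]
      refine congrArg₂ _ rfl (sum_congr rfl fun s hs => ?_)
      rw [gamWeight, if_neg (by have := (mem_Icc.1 hs).1; omega), mul_neg]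
  rw [hGam, sum_range_eq_add_Ico _ (by omega), Ico_add_one_right_eq_Icc, Nat.cast_zero, mul_zero,
    add_zero, gamWeight, if_pos rfl]
  congr 1
  refine sum_subset (Icc_subset_Icc_right hkJ) fun s hs hs' => ?_
  rw [Zwp_of_add_lt R (by simp only [mem_Icc] at hs hs'; push_cast; omega), zero_mul]

noncomputable def dimerConv (R : ℤ → A) (a b : ℤ) (G : ℕ → A) (k : ℕ) : A :=
  ∑ i ∈ range (k + 1), (-1) ^ i * Pdim R a b i * G (k - i)

theorem dimerConv_Gam (R : ℤ → A) (g : ℕ → A) (m : ℕ) {c ν b : ℤ} {k : ℕ} (hν : ν = c + 1)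
    (h₁ : c + 2 * k ≤ b + 2) (h₂ : b < c + 2 * k) :
    dimerConv R c b (fun i => Gam R g m i ν) k =
      gamWeight R g m k ν +
        if 1 ≤ k ∧ b + 2 = c + 2 * k then R (b + 1) * gamWeight R g m (k - 1) ν else 0 := by
  subst hν
  simp only [dimerConv, Gam_eq_sum_range R g m (Nat.sub_le k _) (c + 1), add_sub_cancel_right,
    mul_sum]
  rw [sum_comm]
  simp only [← mul_assoc, ← sum_mul]
  rw [sum_congr rfl fun s hs => by
    rw [sum_range_alternating_Pdim_mul_Zwp R (mem_range_succ_iff.1 hs) h₁ h₂]]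
  simp only [add_mul, sum_add_distrib, ite_mul, one_mul, zero_mul, sum_ite_eq', mem_range,
    lt_add_one, if_true]
  congr 1
  by_cases hk : 1 ≤ k ∧ b + 2 = c + 2 * k
  · rw [if_pos hk, sum_eq_single_of_mem (k - 1) (mem_range.2 (by omega)) fun s _ hs =>
      if_neg (by omega), if_pos ⟨by omega, hk.2⟩]
  · rw [if_neg hk]
    exact sum_eq_zero fun s _ => if_neg fun h => hk ⟨by omega, h.2⟩

theorem dimerConv_sub (R : ℤ → A) (a b : ℤ) (G H : ℕ → A) (k : ℕ) :
    dimerConv R a b (fun i => G i - H i) k = dimerConv R a b G k - dimerConv R a b H k := by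
  simp only [dimerConv, mul_sub, sum_sub_distrib]

theorem dimerConv_sub_one (R : ℤ → A) {a b : ℤ} (h : a - 1 < b) (G : ℕ → A) (k : ℕ) :
    dimerConv R (a - 1) b G (k + 1) =
      dimerConv R a b G (k + 1) - R a * dimerConv R (a + 1) b G k := by
  have hPdim (e : ℕ) :
      Pdim R (a - 1) b (e + 1) = Pdim R a b (e + 1) + R a * Pdim R (a + 1) b e := by
    rw [Pdim_succ R e h, sub_add_cancel, show a - 1 + 2 = a + 1 by ring]
  simp only [dimerConv, sum_range_succ' _ (k + 1), hPdim, Pdim_zero, mul_sum]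
  rw [add_sub_right_comm, ← sum_sub_distrib]
  congr 1
  refine sum_congr rfl fun i _ => ?_
  rw [Nat.add_sub_add_right, pow_succ]
  ring

theorem sum_Icc_eq_sub_dimerConv (R : ℤ → A) (a b : ℤ) (G : ℕ → A) (j : ℕ) :
    ∑ i ∈ Icc 1 j, (-1) ^ (i - 1) * Pdim R a b i * G (j - i) = G j - dimerConv R a b G j := by
  rw [dimerConv, sum_range_eq_add_Ico _ (by omega), Ico_add_one_right_eq_Icc, ← sub_sub,
    pow_zero, Pdim_zero, one_mul, one_mul, Nat.sub_zero, sub_self, zero_sub, ← sum_neg_distrib]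
  refine sum_congr rfl fun i hi => ?_
  obtain ⟨i, rfl⟩ : ∃ i', i = i' + 1 := ⟨i - 1, by have := (mem_Icc.1 hi).1; omega⟩
  rw [Nat.add_sub_cancel, pow_succ]
  ring

theorem sum_Icc_eq_neg_mul_dimerConv (R : ℤ → A) (a b : ℤ) (r : A) (G : ℕ → A) (k : ℕ) :
    ∑ i ∈ Icc 1 (k + 1), (-1) ^ i * r * Pdim R a b (i - 1) * G (k + 1 - i) =
      -(r * dimerConv R a b G k) := by
  rw [← Ico_add_one_right_eq_Icc, sum_Ico_eq_sum_range, dimerConv, mul_sum, ← sum_neg_distrib,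
    Nat.add_sub_cancel]
  refine sum_congr rfl fun i _ => ?_
  rw [Nat.add_sub_cancel_left, show k + 1 - (1 + i) = k - i by omega]
  ring

theorem gamWeight_succ_add_mul (R : ℤ → A) (g : ℕ → A) (m : ℕ) {n : ℤ} (hn : 0 ≤ n) (j : ℕ) :
    gamWeight R g m (j + 1) (n + 1) + R (n + 2 * j + 1) * gamWeight R g m j (n + 1) =
      gamWeight R g m (j + 1) n + R n * gamWeight R g m j (n + 2) := by
  have h := Vp_sub_one_add_mul R g m (n + 2 * j + 1) (n - 1)
  have h₁ : n + 1 ≠ 0 := by omega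
  have h₂ : n + 2 ≠ 0 := by omega
  rcases j with _ | j <;>
    simp only [gamWeight, Gam, Nat.add_one_ne_zero, h₁, h₂, if_true, if_false] <;>
    push_cast at h ⊢ <;> ring_nf at h ⊢ <;> linear_combination h

theorem stmt_8_general {A : Type*} [CommRing A] (R : ℤ → A) (m : ℕ) (g : ℕ → A)
    (n : ℤ) (hn : 0 ≤ n) (j : ℕ) (hj : 1 ≤ j) :
    Gam R g m j (n + 1) - Gam R g m j n =
      (∑ i ∈ Finset.Icc 1 j,
          (-1 : A) ^ (i - 1) * Pdim R n (n + 2 * (j : ℤ) - 2) i *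
            (Gam R g m (j - i) (n + 1) - Gam R g m (j - i) n)) -
        ∑ i ∈ Finset.Icc 1 j,
          (-1 : A) ^ i * R n * Pdim R (n + 1) (n + 2 * (j : ℤ) - 2) (i - 1) *
            (Gam R g m (j - i) (n + 2) - Gam R g m (j - i) n) := by
  obtain ⟨k, rfl⟩ : ∃ k, j = k + 1 := ⟨j - 1, by omega⟩
  set b := n + 2 * ((k + 1 : ℕ) : ℤ) - 2 with hb
  rw [sum_Icc_eq_sub_dimerConv R n b (fun i => Gam R g m i (n + 1) - Gam R g m i n),
    sum_Icc_eq_neg_mul_dimerConv R (n + 1) b (R n) (fun i => Gam R g m i (n + 2) - Gam R g m i n),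
    dimerConv_sub, dimerConv_sub]
  have hA := dimerConv_Gam R g m (c := n) (b := b) (k := k + 1) rfl (by omega) (by omega)
  have hB := dimerConv_Gam R g m (c := n - 1) (b := b) (k := k + 1) (sub_add_cancel n 1).symm
    (by omega) (by omega)
  have hC := dimerConv_Gam R g m (c := n + 1) (ν := n + 2) (b := b) (k := k) (by ring)
    (by omega) (by omega)
  rw [if_pos ⟨by omega, by omega⟩] at hA
  rw [if_neg (by omega)] at hB hC
  have hsplit := dimerConv_sub_one R (a := n) (b := b) (by omega) (fun i => Gam R g m i n) k
  have hrel := gamWeight_succ_add_mul R g m hn k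
  rw [Nat.add_sub_cancel, show b + 1 = n + 2 * k + 1 by omega] at hA
  linear_combination hA + hsplit - hB - R n * hC + hrel

/-- the unconditional difference identity for the `Γ`'s. -/
theorem stmt_8 {A : Type*} [CommRing A] (R : ℤ → A) (m : ℕ) (hm : 1 ≤ m) (g : ℕ → A)
    (n : ℤ) (hn : 0 ≤ n) (j : ℕ) (hj : 1 ≤ j) :
    Gam R g m j (n + 1) - Gam R g m j n =
      (∑ i ∈ Finset.Icc 1 j,
          (-1 : A) ^ (i - 1) * Pdim R n (n + 2 * (j : ℤ) - 2) i *
            (Gam R g m (j - i) (n + 1) - Gam R g m (j - i) n)) -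
        ∑ i ∈ Finset.Icc 1 j,
          (-1 : A) ^ i * R n * Pdim R (n + 1) (n + 2 * (j : ℤ) - 2) (i - 1) *
            (Gam R g m (j - i) (n + 2) - Gam R g m (j - i) n) :=
  stmt_8_general R m g n hn j hj
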